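/- arXiv:1307.3586 — 3 statements merged into one kernel-verified Lean document; each statement's English description precedes it below -/
import Mathlib

section
/- Let Γ be a symmetric bimatrix game with row payoff matrix A. If (x, y) is a Nash equilibrium of Γ with x ≠ y, then W = (1/2)(x yᵀ + y xᵀ) is a symmetric correlated equilibrium of Γ that is not an exchangeable equilibrium. Hence if Γ has an asymmetric Nash equilibrium, then XE_sym(Γ) ⊊ CE_sym(Γ). -/
def IsProbVec {m : ℕ} (w : Fin m → ℝ) : Prop :=
  (∀ i, 0 ≤ w i) ∧ ∑ i, w i = 1

def IsCondIID {m : ℕ} (W : Matrix (Fin m) (Fin m) ℝ) : Prop :=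
  ∃ (k : ℕ) (lam : Fin k → ℝ) (w : Fin k → Fin m → ℝ),
    (∀ i, 0 ≤ lam i) ∧ (∑ i, lam i = 1) ∧ (∀ i, IsProbVec (w i)) ∧
      ∀ a b, W a b = ∑ i, lam i * (w i a * w i b)

def IsCorrEq {m : ℕ} (A : Matrix (Fin m) (Fin m) ℝ) (P : Matrix (Fin m) (Fin m) ℝ) : Prop :=
  (∀ a b, 0 ≤ P a b) ∧ (∑ a, ∑ b, P a b = 1) ∧
    (∀ s t, ∑ j, (A t j - A s j) * P s j ≤ 0) ∧
    (∀ s t, ∑ i, (A t i - A s i) * P i s ≤ 0)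

/-- Nash equilibrium of the symmetric bimatrix game with row payoff `A`
(column payoff `Aᵀ`): each mixed strategy is a best response to the other. -/
def IsNash {m : ℕ} (A : Matrix (Fin m) (Fin m) ℝ) (x y : Fin m → ℝ) : Prop :=
  IsProbVec x ∧ IsProbVec y ∧
    (∀ x₂ : Fin m → ℝ, IsProbVec x₂ →
      ∑ i, ∑ j, x₂ i * A i j * y j ≤ ∑ i, ∑ j, x i * A i j * y j) ∧
    (∀ y₂ : Fin m → ℝ, IsProbVec y₂ →
      ∑ i, ∑ j, y₂ i * A i j * x j ≤ ∑ i, ∑ j, y i * A i j * x j)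

/-!
Both players of a Nash equilibrium `(x, y)` only use pure strategies that are best responses,
so every term `x s * regret` and `y s * regret` in the obedience constraints of
`W = (x yᵀ + y xᵀ) / 2` is nonpositive, and `W` is a symmetric correlated equilibrium.
An exchangeable `P = ∑ λₖ wₖ wₖᵀ` is a Gram matrix, so Cauchy–Schwarz gives
`P a b ^ 2 ≤ P a a * P b b`. For `W` this reads `(x a * y b - x b * y a) ^ 2 ≤ 0`,
so `x` and `y` are proportional, hence equal as probability vectors.
-/

open Finset Matrix

variable {m : ℕ}

lemma isProbVec_single (t : Fin m) : IsProbVec (Pi.single t 1 : Fin m → ℝ) :=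
  ⟨fun i => by by_cases h : i = t <;> simp [h], by simp⟩

lemma IsProbVec.le_of_pos_of_isBestResponse {x g : Fin m → ℝ} (hx : IsProbVec x)
    (hbest : ∀ x₂ : Fin m → ℝ, IsProbVec x₂ → ∑ i, x₂ i * g i ≤ ∑ i, x i * g i)
    {s : Fin m} (hs : 0 < x s) (t : Fin m) : g t ≤ g s := by
  set V := ∑ i, x i * g i
  have hle : ∀ t, g t ≤ V := fun t => by
    simpa [Pi.single_apply] using hbest _ (isProbVec_single t)
  have hzero : ∑ i, x i * (V - g i) = 0 := by
    simp only [mul_sub, sum_sub_distrib, ← sum_mul, hx.2, one_mul, V, sub_self]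
  have hterm : x s * (V - g s) = 0 :=
    (sum_eq_zero_iff_of_nonneg fun i _ => mul_nonneg (hx.1 i) (sub_nonneg.2 (hle i))).1
      hzero s (mem_univ s)
  have : g s = V := by
    rcases mul_eq_zero.1 hterm with h | h
    · exact absurd h hs.ne'
    · linarith
  exact this ▸ hle t

lemma payoff_eq_sum_mulVec (A : Matrix (Fin m) (Fin m) ℝ) (x y : Fin m → ℝ) :
    ∑ i, ∑ j, x i * A i j * y j = ∑ i, x i * (A *ᵥ y) i := by
  simp only [mulVec, dotProduct, mul_sum, mul_assoc]

lemma IsNash.symm {A : Matrix (Fin m) (Fin m) ℝ} {x y : Fin m → ℝ} (h : IsNash A x y) :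
    IsNash A y x :=
  ⟨h.2.1, h.1, h.2.2.2, h.2.2.1⟩

lemma IsNash.mulVec_le_of_pos {A : Matrix (Fin m) (Fin m) ℝ} {x y : Fin m → ℝ}
    (h : IsNash A x y) {s : Fin m} (hs : 0 < x s) (t : Fin m) :
    (A *ᵥ y) t ≤ (A *ᵥ y) s :=
  h.1.le_of_pos_of_isBestResponse
    (fun x₂ hx₂ => by simpa only [payoff_eq_sum_mulVec] using h.2.2.1 x₂ hx₂) hs t

lemma IsNash.mul_regret_nonpos {A : Matrix (Fin m) (Fin m) ℝ} {x y : Fin m → ℝ}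
    (h : IsNash A x y) (s t : Fin m) : x s * ((A *ᵥ y) t - (A *ᵥ y) s) ≤ 0 := by
  rcases (h.1.1 s).lt_or_eq with hs | hs
  · exact mul_nonpos_of_nonneg_of_nonpos hs.le (sub_nonpos.2 (h.mulVec_le_of_pos hs t))
  · rw [← hs, zero_mul]

lemma isCorrEq_of_isSymm {A P : Matrix (Fin m) (Fin m) ℝ} (hP : P.IsSymm)
    (hnonneg : ∀ a b, 0 ≤ P a b) (hsum : ∑ a, ∑ b, P a b = 1)
    (hrow : ∀ s t, ∑ j, (A t j - A s j) * P s j ≤ 0) : IsCorrEq A P :=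
  ⟨hnonneg, hsum, hrow, fun s t => by simpa only [hP.apply] using hrow s t⟩

lemma IsCondIID.isSymm {P : Matrix (Fin m) (Fin m) ℝ} (hP : IsCondIID P) : P.IsSymm := by
  obtain ⟨k, lam, w, -, -, -, hrep⟩ := hP
  exact IsSymm.ext fun a b => by simp only [hrep, mul_comm (w _ a)]

lemma IsCondIID.sq_le_mul_diag {P : Matrix (Fin m) (Fin m) ℝ} (hP : IsCondIID P)
    (a b : Fin m) : P a b ^ 2 ≤ P a a * P b b := by
  obtain ⟨k, lam, w, hlam, -, -, hrep⟩ := hP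
  rw [hrep, hrep, hrep]
  exact sum_sq_le_sum_mul_sum_of_sq_le_mul _
    (fun i _ => mul_nonneg (hlam i) (mul_self_nonneg _))
    (fun i _ => mul_nonneg (hlam i) (mul_self_nonneg _)) fun i _ => le_of_eq (by ring)

lemma IsProbVec.eq_of_mul_comm {x y : Fin m → ℝ} (hx : IsProbVec x) (hy : IsProbVec y)
    (h : ∀ a b, x a * y b = x b * y a) : x = y := by
  funext a
  have := sum_congr rfl fun b (_ : b ∈ univ) => h a b
  rwa [← mul_sum, ← sum_mul, hy.2, hx.2, mul_one, one_mul] at this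

section SymmetrizedProduct

variable {x y : Fin m → ℝ} {W : Matrix (Fin m) (Fin m) ℝ}
  (hW : ∀ a b, W a b = (x a * y b + y a * x b) / 2)
include hW

lemma isSymm_of_eq_symmetrized : W.IsSymm :=
  IsSymm.ext fun a b => by rw [hW, hW]; ring

lemma regret_eq_of_eq_symmetrized (A : Matrix (Fin m) (Fin m) ℝ) (s t : Fin m) :
    ∑ j, (A t j - A s j) * W s j =
      (x s * ((A *ᵥ y) t - (A *ᵥ y) s) + y s * ((A *ᵥ x) t - (A *ᵥ x) s)) / 2 := by
  simp only [hW, mulVec, dotProduct, ← sum_sub_distrib, mul_sum, ← sum_add_distrib, sum_div]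
  exact sum_congr rfl fun j _ => by ring

lemma IsNash.isCorrEq_of_eq_symmetrized {A : Matrix (Fin m) (Fin m) ℝ} (h : IsNash A x y) :
    IsCorrEq A W := by
  refine isCorrEq_of_isSymm (isSymm_of_eq_symmetrized hW) (fun a b => ?_) ?_ fun s t => ?_
  · rw [hW]
    have := mul_nonneg (h.1.1 a) (h.2.1.1 b)
    have := mul_nonneg (h.2.1.1 a) (h.1.1 b)
    linarith
  · simp only [hW, ← sum_div, sum_add_distrib, ← mul_sum, ← sum_mul, h.1.2, h.2.1.2]
    norm_num
  · rw [regret_eq_of_eq_symmetrized hW]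
    linarith [h.mul_regret_nonpos s t, h.symm.mul_regret_nonpos s t]

lemma not_isCondIID_of_eq_symmetrized (hx : IsProbVec x) (hy : IsProbVec y) (hne : x ≠ y) :
    ¬ IsCondIID W := by
  intro hP
  refine hne (hx.eq_of_mul_comm hy fun a b => ?_)
  have := hP.sq_le_mul_diag a b
  rw [hW, hW, hW] at this
  nlinarith [sq_nonneg (x a * y b - x b * y a)]

end SymmetrizedProduct

theorem stmt11 {m : ℕ} (A : Matrix (Fin m) (Fin m) ℝ) (x y : Fin m → ℝ)
    (hnash : IsNash A x y) (hne : x ≠ y)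
    (W : Matrix (Fin m) (Fin m) ℝ)
    (hW : ∀ a b, W a b = (x a * y b + y a * x b) / 2) :
    (IsCorrEq A W ∧ W.IsSymm ∧ ¬ IsCondIID W) ∧
      {P : Matrix (Fin m) (Fin m) ℝ | IsCorrEq A P ∧ IsCondIID P} ⊂
        {P : Matrix (Fin m) (Fin m) ℝ | IsCorrEq A P ∧ P.IsSymm} := by
  have hCE := hnash.isCorrEq_of_eq_symmetrized hW
  have hsymm := isSymm_of_eq_symmetrized hW
  have hnot := not_isCondIID_of_eq_symmetrized hW hnash.1 hnash.2.1 hne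
  refine ⟨⟨hCE, hsymm, hnot⟩, fun P ⟨hPce, hP⟩ => ⟨hPce, hP.isSymm⟩, fun hsub => ?_⟩
  exact hnot (hsub ⟨hCE, hsymm⟩).2
end

section
/- For the symmetric game with payoff matrices A = B = [[2,2,0],[2,1,2],[0,2,2]], the matrix W² = (1/8)·[[1,1,0],[1,2,1],[0,1,1]] is not a convex combination of Nash equilibria of the game (where a Nash equilibrium (x,y) is identified with the matrix x yᵀ). -/
/-!
Write `a, b, c` for the three strategies. If the row player puts weight on `b`, moving that
weight to `a` must not pay, which forces `y b ≤ 2 y c`; symmetrically, weight of the column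
player on `b` forces `x b ≤ 2 x a`. Hence every equilibrium satisfies `x b y b ≤ 4 x a y c`.
This is a linear inequality in the matrix `x yᵀ`, so it survives convex combinations, while
`W₂` violates it: its `(b, b)` entry is positive and its `(a, c)` entry vanishes.
-/

open Matrix

lemma sum_sum_mul_mul_eq_dotProduct_mulVec {m : ℕ} (A : Matrix (Fin m) (Fin m) ℝ)
    (x y : Fin m → ℝ) : ∑ i, ∑ j, x i * A i j * y j = x ⬝ᵥ (A *ᵥ y) := by
  simp only [dotProduct, mulVec, Finset.mul_sum, mul_assoc]

lemma IsProbVec.add_single_sub_single {m : ℕ} {x : Fin m → ℝ} (hx : IsProbVec x) (s t : Fin m) :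
    IsProbVec (x + Pi.single t (x s) - Pi.single s (x s)) := by
  obtain ⟨hx0, hx1⟩ := hx
  refine ⟨fun i => ?_, ?_⟩
  · by_cases hs : i = s
    · subst hs
      by_cases ht : i = t
      · subst ht; simp [hx0 i]
      · simp [ht]
    · simp only [Pi.sub_apply, Pi.add_apply, Pi.single_apply, hs, if_false, sub_zero]
      split_ifs <;> linarith [hx0 i, hx0 s]
  · simp [Finset.sum_add_distrib, Finset.sum_sub_distrib, hx1]

lemma mul_sub_mulVec_nonpos_of_bestResponse {m : ℕ} {A : Matrix (Fin m) (Fin m) ℝ}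
    {x y : Fin m → ℝ} (hx : IsProbVec x)
    (hbest : ∀ x₂ : Fin m → ℝ, IsProbVec x₂ →
      ∑ i, ∑ j, x₂ i * A i j * y j ≤ ∑ i, ∑ j, x i * A i j * y j)
    (s t : Fin m) : x s * ((A *ᵥ y) t - (A *ᵥ y) s) ≤ 0 := by
  have h := hbest _ (hx.add_single_sub_single s t)
  simp only [sum_sum_mul_mul_eq_dotProduct_mulVec, sub_dotProduct, add_dotProduct,
    single_dotProduct] at h
  linarith

lemma IsNash.mul_le_four_mul {x y : Fin 3 → ℝ} (h : IsNash !![2, 2, 0; 2, 1, 2; 0, 2, 2] x y) :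
    x 1 * y 1 ≤ 4 * (x 0 * y 2) := by
  obtain ⟨hx, hy, hbest₁, hbest₂⟩ := h
  have hrow := mul_sub_mulVec_nonpos_of_bestResponse hx hbest₁ 1 0
  have hcol := mul_sub_mulVec_nonpos_of_bestResponse hy hbest₂ 1 2
  simp only [mulVec, dotProduct, Fin.sum_univ_three, of_apply, cons_val', cons_val_fin_one,
    cons_val_zero, cons_val_one, cons_val, zero_mul, one_mul] at hrow hcol
  have hx₀ := hx.1 0
  have hx₁ := hx.1 1
  have hy₁ := hy.1 1
  have hy₂ := hy.1 2
  rcases hx₁.eq_or_lt with hx₁0 | hx₁pos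
  · rw [← hx₁0, zero_mul]; positivity
  rcases hy₁.eq_or_lt with hy₁0 | hy₁pos
  · rw [← hy₁0, mul_zero]; positivity
  have hy_le : y 1 ≤ 2 * y 2 := by nlinarith
  have hx_le : x 1 ≤ 2 * x 0 := by nlinarith
  nlinarith [mul_le_mul hx_le hy_le hy₁ (by positivity)]

lemma convex_setOf_entry_le_mul_entry {m n : Type*} (i k : m) (j l : n) (c : ℝ) :
    Convex ℝ {M : Matrix m n ℝ | M i j ≤ c * M k l} := by
  have hlin : IsLinearMap ℝ fun M : Matrix m n ℝ => M i j - c * M k l :=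
    ⟨fun M N => by simp only [Matrix.add_apply]; ring,
      fun r M => by simp only [Matrix.smul_apply, smul_eq_mul]; ring⟩
  simpa only [sub_nonpos] using convex_halfSpace_le hlin 0

theorem stmt16 (A W₂ : Matrix (Fin 3) (Fin 3) ℝ)
    (hA : A = !![2, 2, 0; 2, 1, 2; 0, 2, 2])
    (hW : W₂ = (1 / 8 : ℝ) • !![1, 1, 0; 1, 2, 1; 0, 1, 1]) :
    W₂ ∉ convexHull ℝ {M : Matrix (Fin 3) (Fin 3) ℝ |
      ∃ x y : Fin 3 → ℝ, IsNash A x y ∧ ∀ a b, M a b = x a * y b} := by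
  subst hA hW
  intro hmem
  have hnash : {M : Matrix (Fin 3) (Fin 3) ℝ |
      ∃ x y : Fin 3 → ℝ, IsNash !![2, 2, 0; 2, 1, 2; 0, 2, 2] x y ∧ ∀ a b, M a b = x a * y b}
      ⊆ {M | M 1 1 ≤ 4 * M 0 2} := by
    rintro M ⟨x, y, hxy, hM⟩
    rw [Set.mem_ofPred_eq, hM, hM]
    exact hxy.mul_le_four_mul
  have hW := convexHull_min hnash (convex_setOf_entry_le_mul_entry 1 0 1 2 4) hmem
  norm_num [cons_val_two] at hW
end

section
/- For the symmetric game with row payoff matrix A = [[0,1,1],[2,1,0],[1,0,1]], the matrix W¹ = [[0,1/2,0],[1/2,0,0],[0,0,0]] is a symmetric correlated equilibrium giving each player expected utility 3/2, but it is not a convex combination of outer products of probability vectors (so it is not an exchangeable equilibrium). -/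
theorem IsCorrEq.of_isSymm {m : ℕ} {A P : Matrix (Fin m) (Fin m) ℝ} (hP : P.IsSymm)
    (hnonneg : ∀ a b, 0 ≤ P a b) (hsum : ∑ a, ∑ b, P a b = 1)
    (hrow : ∀ s t, ∑ j, (A t j - A s j) * P s j ≤ 0) : IsCorrEq A P := by
  refine ⟨hnonneg, hsum, hrow, fun s t => ?_⟩
  simpa only [hP.apply] using hrow s t

/-- Zero mass on `(t, t)` forces `w t = 0` in every summand `w wᵀ` of positive weight. -/
theorem IsCondIID.apply_eq_zero_of_diag_eq_zero {m : ℕ} {W : Matrix (Fin m) (Fin m) ℝ}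
    (hW : IsCondIID W) {t : Fin m} (htt : W t t = 0) (s : Fin m) : W t s = 0 := by
  obtain ⟨k, lam, w, hlam, -, -, hWeq⟩ := hW
  have hterm_nonneg : ∀ i ∈ Finset.univ, 0 ≤ lam i * (w i t * w i t) :=
    fun i _ => mul_nonneg (hlam i) (mul_self_nonneg _)
  have hterm_zero : ∀ i, lam i * (w i t * w i t) = 0 := fun i =>
    (Finset.sum_eq_zero_iff_of_nonneg hterm_nonneg).mp (htt ▸ hWeq t t).symm i (Finset.mem_univ i)
  rw [hWeq]
  refine Finset.sum_eq_zero fun i _ => ?_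
  rcases mul_eq_zero.mp (hterm_zero i) with h | h
  · simp [h]
  · simp [mul_self_eq_zero.mp h]

theorem not_isCondIID_of_diag_eq_zero {m : ℕ} {W : Matrix (Fin m) (Fin m) ℝ} {t s : Fin m}
    (htt : W t t = 0) (hts : W t s ≠ 0) : ¬ IsCondIID W :=
  fun hW => hts (hW.apply_eq_zero_of_diag_eq_zero htt s)

theorem stmt19 (A W₁ : Matrix (Fin 3) (Fin 3) ℝ)
    (hA : A = !![0, 1, 1; 2, 1, 0; 1, 0, 1])
    (hW : W₁ = !![0, 1/2, 0; 1/2, 0, 0; 0, 0, 0]) :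
    IsCorrEq A W₁ ∧ W₁.IsSymm ∧ (∑ i, ∑ j, A i j * W₁ i j) = 3 / 2 ∧ ¬ IsCondIID W₁ := by
  subst hA hW
  have hsymm : (!![0, 1/2, 0; 1/2, 0, 0; 0, 0, 0] : Matrix (Fin 3) (Fin 3) ℝ).IsSymm := by
    ext a b
    fin_cases a <;> fin_cases b <;> rfl
  refine ⟨IsCorrEq.of_isSymm hsymm ?_ ?_ ?_, hsymm, ?_,
    not_isCondIID_of_diag_eq_zero (t := 0) (s := 1) (by simp) (by simp)⟩
  · intro a b
    fin_cases a <;> fin_cases b <;> norm_num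
  · norm_num [Fin.sum_univ_three, Matrix.cons_val_two, Matrix.cons_val_one, Matrix.cons_val_zero]
  · intro s t
    fin_cases s <;> fin_cases t <;>
      norm_num [Fin.sum_univ_three, Matrix.cons_val_two, Matrix.cons_val_one, Matrix.cons_val_zero]
  · norm_num [Fin.sum_univ_three, Matrix.cons_val_two, Matrix.cons_val_one, Matrix.cons_val_zero]
end
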